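/- For every even integer m ≥ 6, the graph H_m is triangle-free, i.e., it contains no clique on 3 vertices. -/
import Mathlib


open SimpleGraph

/-- Vertex type for the graphs on `2m+1` vertices: `Sum.inl i` is the vertex `pᵢ`,
`Sum.inr (Sum.inl i)` is the vertex `qᵢ` (indices taken modulo `m`),
and `Sum.inr (Sum.inr ())` is the apex vertex `a`. -/
abbrev GVert (m : ℕ) := Sum (ZMod m) (Sum (ZMod m) Unit)

/-- The vertex `pᵢ`. -/
def pV {m : ℕ} (i : ZMod m) : GVert m := Sum.inl i

/-- The vertex `qᵢ`. -/
def qV {m : ℕ} (i : ZMod m) : GVert m := Sum.inr (Sum.inl i)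

/-- The apex vertex `a`. -/
def aV (m : ℕ) : GVert m := Sum.inr (Sum.inr ())

/-- The graph `H_m` (intended for even `m ≥ 6`): edges are `a qᵢ` for all `i`,
`pᵢ pᵢ₊₁` for all `i`, and `pᵢ q_{i + (2k-1)}` for all `i` and `0 ≤ k ≤ (m-2)/2`,
all indices taken modulo `m`. -/
def HGraph (m : ℕ) : SimpleGraph (GVert m) :=
  SimpleGraph.fromRel (fun u v =>
    (∃ i : ZMod m, u = aV m ∧ v = qV i) ∨
    (∃ i : ZMod m, u = pV i ∧ v = pV (i + 1)) ∨
    (∃ (i : ZMod m) (k : ℕ), k ≤ (m - 2) / 2 ∧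
      u = pV i ∧ v = qV (i + (2 * (k : ZMod m) - 1))))

section
variable {m : ℕ}

lemma not_adj_qq (i j : ZMod m) : ¬ (HGraph m).Adj (qV i) (qV j) := by
  simp [HGraph, fromRel_adj, pV, qV, aV]

lemma not_adj_ap (i : ZMod m) : ¬ (HGraph m).Adj (aV m) (pV i) := by
  simp [HGraph, fromRel_adj, pV, qV, aV]

lemma adj_pp {i j : ZMod m} (h : (HGraph m).Adj (pV i) (pV j)) :
    j = i + 1 ∨ i = j + 1 := by
  rw [HGraph, fromRel_adj] at h
  obtain ⟨-, h | h⟩ := h <;>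
      simp only [pV, qV, aV, Sum.inl.injEq, Sum.inr.injEq, reduceCtorEq,
        exists_and_left, false_and, and_false, exists_const, or_false, false_or] at h
  · obtain ⟨i', h1, h2⟩ := h
    exact Or.inl (by rw [h2, ← h1])
  · obtain ⟨i', h1, h2⟩ := h
    exact Or.inr (by rw [h2, ← h1])

lemma adj_pq {i j : ZMod m} (h : (HGraph m).Adj (pV i) (qV j)) :
    ∃ k : ℕ, j = i + (2 * (k : ZMod m) - 1) := by
  rw [HGraph, fromRel_adj] at h
  obtain ⟨-, h | h⟩ := h <;>
    simp only [pV, qV, aV, Sum.inl.injEq, Sum.inr.injEq, reduceCtorEq,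
      false_and, and_false, exists_const, or_false, false_or,
      exists_and_left] at h
  · obtain ⟨i', k, -, h1, h2⟩ := h
    exact ⟨k, by rw [h2, ← h1]⟩

lemma two_mul_sub_one : ∀ x : ZMod 2, 2 * x - 1 = 1 := by decide

lemma self_eq_add_two : ∀ a : ZMod 2, a = a + 1 + 1 := by decide

lemma par_pp (h2m : (2:ℕ) ∣ m) {i j : ZMod m} (h : (HGraph m).Adj (pV i) (pV j)) :
    ZMod.castHom h2m (ZMod 2) j = ZMod.castHom h2m (ZMod 2) i + 1 := by
  rcases adj_pp h with rfl | rfl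
  · rw [map_add, map_one]
  · rw [map_add, map_one]
    exact self_eq_add_two _

lemma par_pq (h2m : (2:ℕ) ∣ m) {i j : ZMod m} (h : (HGraph m).Adj (pV i) (qV j)) :
    ZMod.castHom h2m (ZMod 2) j = ZMod.castHom h2m (ZMod 2) i + 1 := by
  obtain ⟨k, rfl⟩ := adj_pq h
  rw [map_add, map_sub, map_mul, map_natCast, map_one, map_ofNat,
    two_mul_sub_one _]

lemma pc : ∀ a b c : ZMod 2, b = a + 1 → c = a + 1 → c = b + 1 → False := by decide

lemma flip2 : ∀ a b : ZMod 2, a = b + 1 → b = a + 1 := by decide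

end

/-- For every even integer `m ≥ 6`, the graph `H_m` is triangle-free. -/
theorem hGraph_triangleFree (m : ℕ) (h6 : 6 ≤ m) (heven : Even m) :
    (HGraph m).CliqueFree 3 := by
  have h2m : (2:ℕ) ∣ m := heven.two_dvd
  intro t ht
  rw [is3Clique_iff] at ht
  obtain ⟨x, y, z, hxy, hxz, hyz, -⟩ := ht
  rcases x with i | i | ⟨⟩ <;> rcases y with j | j | ⟨⟩ <;> rcases z with k | k | ⟨⟩
  all_goals first
    | exact not_adj_qq _ _ hxy | exact not_adj_qq _ _ hxz | exact not_adj_qq _ _ hyz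
    | exact not_adj_ap _ hxy | exact not_adj_ap _ hxz | exact not_adj_ap _ hyz
    | exact not_adj_ap _ hxy.symm | exact not_adj_ap _ hxz.symm
    | exact not_adj_ap _ hyz.symm
    | exact hxy.ne rfl | exact hxz.ne rfl | exact hyz.ne rfl
    | skip
  all_goals first
    | exact pc _ _ _ (par_pp h2m hxy) (par_pp h2m hxz) (par_pp h2m hyz)
    | exact pc _ _ _ (par_pp h2m hxy) (par_pq h2m hxz) (par_pq h2m hyz)
    | exact pc _ _ _ (par_pq h2m hxy) (par_pp h2m hxz)
        (flip2 _ _ (par_pq h2m hyz.symm))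
    | exact pc _ _ _ (par_pq h2m hxy.symm) (par_pp h2m hyz)
        (flip2 _ _ (par_pq h2m hxz.symm))
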